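/- Let B and D be orthogonal projections on ℂ^N with D̄ = I − D. If ‖D̄ B‖ = 1, then there exists a nonzero band-limited vector x (Bx = x) with Dx = 0; hence reconstruction of band-limited signals from samples on D fails. -/

import Mathlib

open Matrix
open scoped Matrix.Norms.L2Operator

/-!
In finite dimensions the norm of `D̄ B` is attained at some `x` with `‖x‖ ≤ 1`. Orthogonal
projections are contractions, so `‖x‖ ≤ ‖D̄ B x‖ ≤ ‖B x‖ ≤ ‖x‖`, and a projection that preserves
the norm of a vector fixes it. Hence `B x = x` and `D̄ x = x`, i.e. `D x = 0`.
-/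

theorem ContinuousLinearMap.exists_mem_closedBall_norm_apply_eq_opNorm
    {𝕜 E F : Type*} [DenselyNormedField 𝕜] [NormedAddCommGroup E] [NormedSpace 𝕜 E]
    [ProperSpace E] [SeminormedAddCommGroup F] [NormedSpace 𝕜 F] (f : E →L[𝕜] F) :
    ∃ x ∈ Metric.closedBall (0 : E) 1, ‖f x‖ = ‖f‖ := by
  obtain ⟨x, hx, hmax⟩ := (isCompact_closedBall (0 : E) 1).exists_sSup_image_eq
    (Metric.nonempty_closedBall.mpr zero_le_one) f.continuous.norm.continuousOn
  exact ⟨x, hx, hmax.symm.trans f.sSup_unitClosedBall_eq_norm⟩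

namespace IsStarProjection

variable {𝕜 E : Type*} [RCLike 𝕜] [NormedAddCommGroup E] [InnerProductSpace 𝕜 E]

section Complete

variable [CompleteSpace E] {p q : E →L[𝕜] E}

theorem norm_apply_le (hp : IsStarProjection p) (x : E) : ‖p x‖ ≤ ‖x‖ := by
  obtain ⟨K, _, rfl⟩ := isStarProjection_iff_eq_starProjection.mp hp
  exact K.norm_starProjection_apply_le x

theorem apply_eq_self_of_norm_apply_eq (hp : IsStarProjection p) {x : E} (h : ‖p x‖ = ‖x‖) :
    p x = x := by
  obtain ⟨K, _, rfl⟩ := isStarProjection_iff_eq_starProjection.mp hp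
  exact K.starProjection_eq_self_iff.mpr ((K.mem_iff_norm_starProjection x).mpr h)

theorem apply_eq_self_and_apply_eq_self_of_norm_le (hp : IsStarProjection p)
    (hq : IsStarProjection q) {x : E} (h : ‖x‖ ≤ ‖q (p x)‖) : p x = x ∧ q x = x := by
  have hpx : p x = x := hp.apply_eq_self_of_norm_apply_eq <|
    le_antisymm (hp.norm_apply_le x) (h.trans (hq.norm_apply_le (p x)))
  refine ⟨hpx, hq.apply_eq_self_of_norm_apply_eq (le_antisymm (hq.norm_apply_le x) ?_)⟩
  rwa [hpx] at h

end Complete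

theorem exists_ne_zero_apply_eq_self_of_norm_mul_eq_one [ProperSpace E]
    {p q : E →L[𝕜] E} (hp : IsStarProjection p) (hq : IsStarProjection q) (h : ‖q * p‖ = 1) :
    ∃ x ≠ 0, p x = x ∧ q x = x := by
  obtain ⟨x, hx, hqpx⟩ := (q * p).exists_mem_closedBall_norm_apply_eq_opNorm
  rw [h] at hqpx
  refine ⟨x, ?_, hp.apply_eq_self_and_apply_eq_self_of_norm_le hq ?_⟩
  · rintro rfl
    simp at hqpx
  · exact (mem_closedBall_zero_iff.mp hx).trans hqpx.ge

end IsStarProjection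

/-- For orthogonal projections `B`, `D` on `ℂ^N` with `D̄ = I - D`,
if `‖(I - D) * B‖ = 1`, then there is a nonzero band-limited vector `x` (`Bx = x`)
with `Dx = 0`, so reconstruction of band-limited signals from samples on `D` fails. -/
theorem exists_bandlimited_vanishing_on_samples {N : ℕ}
    (B D : Matrix (Fin N) (Fin N) ℂ)
    (hBidem : B * B = B) (hBherm : Bᴴ = B)
    (hDidem : D * D = D) (hDherm : Dᴴ = D)
    (h : ‖(1 - D) * B‖ = 1) :
    ∃ x : Fin N → ℂ, x ≠ 0 ∧ B *ᵥ x = x ∧ D *ᵥ x = 0 := by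
  let T := toEuclideanCLM (n := Fin N) (𝕜 := ℂ)
  have hB : IsStarProjection B := ⟨hBidem, hBherm⟩
  have hD : IsStarProjection D := ⟨hDidem, hDherm⟩
  have hTDB : ‖T (1 - D) * T B‖ = 1 := by rw [← map_mul]; exact h
  obtain ⟨x, hx0, hBx, hDbarx⟩ :=
    (hB.map T).exists_ne_zero_apply_eq_self_of_norm_mul_eq_one (hD.one_sub.map T) hTDB
  have hDbarx' : (1 - D) *ᵥ x.ofLp = x.ofLp := congrArg WithLp.ofLp hDbarx
  refine ⟨x.ofLp, by simpa using hx0, congrArg WithLp.ofLp hBx, ?_⟩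
  rwa [sub_mulVec, one_mulVec, sub_eq_self] at hDbarx'
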